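/- Let G be a 2-connected, locally finite, claw-free graph such that for every induced paw of G with pendant vertex a₁ and triangle vertices a₀, b₁, b₂ (where a₁ is adjacent only to a₀), the vertex a₁ has a common neighbour outside the paw with b₁ or with b₂. Let C be a cycle in G and v a vertex adjacent to some vertex of C but not on C. Then there exist a cycle C' and a vertex w adjacent to C such that V(C) ∪ {v} ⊆ V(C') ⊆ V(C) ∪ {v, w}, and moreover every edge in the symmetric difference E(C) Δ E(C') has at least one endvertex at distance at most 2 from v. -/

import Mathlib

/-!
Let `u` be a neighbour of `v` on `C`, and `c`, `d` the neighbours of `u` on `C`. If `v` is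
adjacent to `c` (or `d`), insert `v` into the edge `uc` (or `ud`). Otherwise claw-freeness at `u`
makes `cd` an edge, so `v u c d` is an induced paw and the paw condition gives `x ∉ {u, c, d}`
adjacent to `v` and, say, to `c`. If `x ∉ C`, replace `uc` by the path `u v x c`. If `x ∈ C`, let
`y`, `z` be the neighbours of `x` on `C - uc`. When `v` is adjacent to `y` (or `z`), insert `v`
into `yx` (or `xz`); otherwise claw-freeness at `x` makes `yz` an edge, and replacing `uc, yx, xz`
by `uv, vx, xc, yz` gives the new cycle. Every altered edge has an end in `N[v]`, except `yz`,
whose end `y` is at distance `2` from `v` through `x`.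
-/

open SimpleGraph

/-- The claw `K_{1,3}`: vertex `0` is the centre, adjacent to `1`, `2`, `3`. -/
def claw : SimpleGraph (Fin 4) := SimpleGraph.fromRel (fun a _ => a = 0)

/-- The paw: a triangle on `1, 2, 3` with pendant vertex `0` attached to `1`. -/
def paw : SimpleGraph (Fin 4) :=
  SimpleGraph.fromRel (fun a b => (a = 0 ∧ b = 1) ∨ (a ≠ 0 ∧ b ≠ 0))

/-- `G` is `H`-free: no induced subgraph of `G` is isomorphic to `H`.
(`H ↪g G` is a graph embedding, i.e. an isomorphism onto an induced subgraph.) -/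
def HFree {W V : Type*} (H : SimpleGraph W) (G : SimpleGraph V) : Prop :=
  ¬ Nonempty (H ↪g G)

/-- `G` is 2-connected: at least 3 vertices, connected, and deleting any vertex
leaves it connected. -/
def TwoConnected {V : Type*} (G : SimpleGraph V) : Prop :=
  (∃ a b c : V, a ≠ b ∧ a ≠ c ∧ b ≠ c) ∧ G.Connected ∧
    ∀ v : V, (G.induce {u | u ≠ v}).Connected

/-- The hypothesis that every induced paw of `G`, with pendant vertex `a₁` adjacent
precisely to the triangle vertex `a₀`, satisfies `φ(a₁,b₁)` or `φ(a₁,b₂)`: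
`a₁` has a common neighbour outside the paw with `b₁` or with `b₂`. -/
def PawCondition {V : Type*} (G : SimpleGraph V) : Prop :=
  ∀ a₁ a₀ b₁ b₂ : V,
    G.Adj a₁ a₀ → G.Adj a₀ b₁ → G.Adj a₀ b₂ → G.Adj b₁ b₂ →
    ¬ G.Adj a₁ b₁ → ¬ G.Adj a₁ b₂ → a₁ ≠ b₁ → a₁ ≠ b₂ →
    ∃ x, x ∉ ({a₁, a₀, b₁, b₂} : Set V) ∧ G.Adj x a₁ ∧ (G.Adj x b₁ ∨ G.Adj x b₂)

/-- A ray (one-way infinite path) in `G`, given by its sequence of vertices. -/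
def IsRay {V : Type*} (G : SimpleGraph V) (f : ℕ → V) : Prop :=
  Function.Injective f ∧ ∀ n, G.Adj (f n) (f (n + 1))

/-- Two rays are equivalent (belong to the same end) if no finite vertex set
separates them. -/
def EndEquiv {V : Type*} (G : SimpleGraph V) (f g : ℕ → V) : Prop :=
  ∀ S : Set V, S.Finite →
    ∃ (m n : ℕ) (p : G.Walk (f m) (g n)), ∀ x ∈ p.support, x ∉ S

/-- The ends of `G`, as equivalence classes of rays. -/
def Ends {V : Type*} (G : SimpleGraph V) : Type _ :=
  Quot (fun f g : {f : ℕ → V // IsRay G f} => EndEquiv G f.1 g.1)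

/-- The edge cut `δ(X)`. -/
def edgeCut {V : Type*} (G : SimpleGraph V) (X : Set V) : Set (Sym2 V) :=
  {e | e ∈ G.edgeSet ∧ ∃ a b, e = s(a, b) ∧ a ∈ X ∧ b ∉ X}

/-- `G` has a Hamilton circle in its Freudenthal compactification `|G|`,
expressed combinatorially: there is a spanning edge set `C` in which every
vertex has degree exactly `2` and which meets every finite cut of `G` in a
positive even number of edges (for locally finite connected `G` this
characterises edge sets whose closure in `|G|` is a circle through all
vertices). -/
def HasHamiltonCircle {V : Type*} (G : SimpleGraph V) : Prop :=
  ∃ C ⊆ G.edgeSet, (∀ v : V, {e ∈ C | v ∈ e}.ncard = 2) ∧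
    ∀ X : Set V, X.Nonempty → Xᶜ.Nonempty → (edgeCut G X).Finite →
      (C ∩ edgeCut G X).Nonempty ∧ Even ((C ∩ edgeCut G X).ncard)

/-- The end represented by the ray `g` lies in the closure (in `|G|`) of the
vertex set `M`: for every finite `S`, the component of `G - S` containing a
tail of `g` meets `M`. -/
def EndInClosure {V : Type*} (G : SimpleGraph V) (g : ℕ → V) (M : Set V) : Prop :=
  ∀ S : Set V, S.Finite → ∃ u ∈ M, ∃ N : ℕ, ∀ n ≥ N,
    ∃ p : G.Walk u (g n), ∀ x ∈ p.support, x ∉ S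

/-- `S` is a vertex separator of `G`: `G - S` is disconnected. -/
def IsSeparator {V : Type*} (G : SimpleGraph V) (S : Set V) : Prop :=
  ∃ (u : V) (hu : u ∉ S) (v : V) (hv : v ∉ S),
    ¬ (G.induce {x | x ∉ S}).Reachable ⟨u, hu⟩ ⟨v, hv⟩

/-- `S` is a minimal vertex separator of `G`. -/
def IsMinSeparator {V : Type*} (G : SimpleGraph V) (S : Set V) : Prop :=
  IsSeparator G S ∧ ∀ T ⊂ S, ¬ IsSeparator G T

/-- The `k`-blow-up of `G`: each vertex is replaced by a `k`-clique. -/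
def blowup {V : Type*} (G : SimpleGraph V) (k : ℕ) : SimpleGraph (V × Fin k) where
  Adj x y := (x.1 = y.1 ∧ x.2 ≠ y.2) ∨ G.Adj x.1 y.1
  symm := by
    refine ⟨?_⟩
    rintro x y (⟨h1, h2⟩ | h)
    · exact Or.inl ⟨h1.symm, h2.symm⟩
    · exact Or.inr h.symm
  loopless := by
    refine ⟨?_⟩
    rintro x (⟨_, h⟩ | h)
    · exact h rfl
    · exact G.loopless.irrefl _ h

lemma forall_mem_symmDiff_of_subset_union {α : Type*} {P : α → Prop} {E E' F : Set α}
    (h : E ⊆ E' ∪ F) (h' : E' ⊆ E ∪ F) (hF : ∀ e ∈ F, P e) : ∀ e ∈ symmDiff E E', P e :=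
  fun e he => hF e (symmDiff_le h h' he)

namespace SimpleGraph

variable {V : Type*} {G : SimpleGraph V}

def HasLocalExtension (G : SimpleGraph V) (v : V) {a : V} (C : G.Walk a a) : Prop :=
  ∃ (b : V) (C' : G.Walk b b) (w : V), C'.IsCycle ∧
    (∃ u ∈ C.support, u = w ∨ G.Adj u w) ∧
    {x | x ∈ C.support} ∪ {v} ⊆ {x | x ∈ C'.support} ∧
    {x | x ∈ C'.support} ⊆ {x | x ∈ C.support} ∪ {v, w} ∧
    ∀ e ∈ symmDiff {e | e ∈ C.edges} {e | e ∈ C'.edges}, ∃ x ∈ e, G.dist v x ≤ 2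

lemma adj_of_clawFree (hclaw : HFree claw G) {c a b d : V}
    (hca : G.Adj c a) (hcb : G.Adj c b) (hcd : G.Adj c d)
    (hab : a ≠ b) (had : a ≠ d) (hbd : b ≠ d)
    (nab : ¬ G.Adj a b) (nad : ¬ G.Adj a d) : G.Adj b d := by
  by_contra nbd
  refine hclaw ⟨⟨⟨![c, a, b, d], ?_⟩, ?_⟩⟩
  · intro i j hij
    fin_cases i <;> fin_cases j <;>
      simp_all [hca.ne, hcb.ne, hcd.ne, hca.ne', hcb.ne', hcd.ne']
  · intro i j
    show G.Adj (![c, a, b, d] i) (![c, a, b, d] j) ↔ claw.Adj i j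
    fin_cases i <;> fin_cases j <;>
      simp [claw, hca, hcb, hcd, hca.symm, hcb.symm, hcd.symm, nab, nad, nbd,
        G.adj_comm b a, G.adj_comm d a, G.adj_comm d b]

lemma dist_le_two_of_adj {a b : V} (h : G.Adj a b) : G.dist a b ≤ 2 :=
  (dist_le h.toWalk).trans (by simp)

lemma dist_le_two_of_adj_of_adj {a b c : V} (hab : G.Adj a b) (hbc : G.Adj b c) :
    G.dist a c ≤ 2 :=
  dist_le (.cons hab hbc.toWalk)

lemma Walk.isCycle_of_nodup_support_tail {a : V} {C : G.Walk a a} (h : C.support.tail.Nodup)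
    (hl : 3 ≤ C.length) : C.IsCycle := by
  have hC : ¬ C.Nil := fun hn => by rw [Walk.length_eq_zero_iff.2 hn] at hl; omega
  exact Walk.isCycle_iff_isPath_tail_and_le_length.2
    ⟨by rwa [Walk.isPath_def, Walk.support_tail_of_not_nil _ hC], hl⟩

namespace HasLocalExtension

variable {v a b : V}

lemma of_support_edges_iff {C : G.Walk a a} {D : G.Walk b b}
    (hS : ∀ x, x ∈ C.support ↔ x ∈ D.support) (hE : ∀ e, e ∈ C.edges ↔ e ∈ D.edges)
    (h : G.HasLocalExtension v D) : G.HasLocalExtension v C := by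
  simpa only [HasLocalExtension, hS, hE] using h

lemma of_rotate [DecidableEq V] {C : G.Walk a a} (hb : b ∈ C.support)
    (h : G.HasLocalExtension v (C.rotate b hb)) : G.HasLocalExtension v C :=
  h.of_support_edges_iff (fun _ => (Walk.mem_support_rotate_iff ..).symm)
    (fun _ => (Walk.rotate_edges ..).mem_iff.symm)

lemma of_reverse {C : G.Walk a a} (h : G.HasLocalExtension v C.reverse) :
    G.HasLocalExtension v C :=
  h.of_support_edges_iff (by simp) (by simp)

end HasLocalExtension

open Walk

variable {v a c x y z : V}

lemma hasLocalExtension_insert {t : G.Walk a y} {r : G.Walk x a} (hyx : G.Adj y x)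
    (hD : (t.append (cons hyx r)).IsCycle) (hv : v ∉ (t.append (cons hyx r)).support)
    (hyv : G.Adj y v) (hvx : G.Adj v x) : G.HasLocalExtension v (t.append (cons hyx r)) := by
  have hnodup := hD.support_nodup
  have hlen := hD.three_le_length
  simp only [support_append, support_cons, List.tail_cons, List.mem_append, not_or] at hv
  refine ⟨a, t.append (cons hyv (cons hvx r)), v, ?_, ⟨y, by simp, .inr hyv⟩, ?_, ?_, ?_⟩
  · refine isCycle_of_nodup_support_tail ?_ (by simp at hlen ⊢; omega)
    simp only [tail_support_append, support_cons, List.tail_cons, List.nodup_middle] at hnodup ⊢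
    refine List.nodup_cons.2 ⟨fun h => ?_, hnodup⟩
    exact (List.mem_append.1 h).elim (fun h => hv.1 (List.mem_of_mem_tail h)) hv.2
  · intro z hz
    simp only [Set.mem_union, Set.mem_singleton_iff, Set.mem_ofPred_eq,
      mem_support_append_iff, support_cons, List.mem_cons] at hz ⊢
    tauto
  · intro z hz
    simp only [Set.mem_union, Set.mem_insert_iff, Set.mem_singleton_iff, Set.mem_ofPred_eq,
      mem_support_append_iff, support_cons, List.mem_cons] at hz ⊢
    tauto
  · refine forall_mem_symmDiff_of_subset_union (F := {s(y, x), s(y, v), s(v, x)}) ?_ ?_ ?_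
    · intro e he
      simp only [Set.mem_union, Set.mem_insert_iff, Set.mem_singleton_iff, Set.mem_ofPred_eq,
        edges_append, edges_cons, List.mem_append, List.mem_cons] at he ⊢
      tauto
    · intro e he
      simp only [Set.mem_union, Set.mem_insert_iff, Set.mem_singleton_iff, Set.mem_ofPred_eq,
        edges_append, edges_cons, List.mem_append, List.mem_cons] at he ⊢
      tauto
    · rintro e (rfl | rfl | rfl)
      · exact ⟨y, Sym2.mem_mk_left _ _, dist_le_two_of_adj hyv.symm⟩
      · exact ⟨v, Sym2.mem_mk_right _ _, by simp⟩
      · exact ⟨v, Sym2.mem_mk_left _ _, by simp⟩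

/-- The edge `ac` is replaced by the path `a v x c`. -/
lemma hasLocalExtension_detour {q : G.Walk c a} (hac : G.Adj a c) (hD : (cons hac q).IsCycle)
    (hv : v ∉ (cons hac q).support) (hx : x ∉ (cons hac q).support)
    (hva : G.Adj v a) (hvx : G.Adj v x) (hxc : G.Adj x c) :
    G.HasLocalExtension v (cons hac q) := by
  have hnodup := hD.support_nodup
  simp only [support_cons, List.mem_cons, not_or, List.tail_cons] at hv hx hnodup
  refine ⟨a, cons hva.symm (cons hvx (cons hxc q)), x, ?_, ⟨c, by simp, .inr hxc.symm⟩,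
    ?_, ?_, ?_⟩
  · refine isCycle_of_nodup_support_tail ?_ (by simp)
    simp only [support_cons, List.tail_cons, List.nodup_cons, List.mem_cons, not_or]
    exact ⟨⟨hvx.ne, hv.2⟩, hx.2, hnodup⟩
  · intro z hz
    simp only [Set.mem_union, Set.mem_singleton_iff, Set.mem_ofPred_eq,
      support_cons, List.mem_cons] at hz ⊢
    tauto
  · intro z hz
    simp only [Set.mem_union, Set.mem_insert_iff, Set.mem_singleton_iff, Set.mem_ofPred_eq,
      support_cons, List.mem_cons] at hz ⊢
    tauto
  · refine forall_mem_symmDiff_of_subset_union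
      (F := {s(a, c), s(a, v), s(v, x), s(x, c)}) ?_ ?_ ?_
    · intro e he
      simp only [Set.mem_union, Set.mem_insert_iff, Set.mem_singleton_iff, Set.mem_ofPred_eq,
        edges_cons, List.mem_cons] at he ⊢
      tauto
    · intro e he
      simp only [Set.mem_union, Set.mem_insert_iff, Set.mem_singleton_iff, Set.mem_ofPred_eq,
        edges_cons, List.mem_cons] at he ⊢
      tauto
    · rintro e (rfl | rfl | rfl | rfl)
      · exact ⟨a, Sym2.mem_mk_left _ _, dist_le_two_of_adj hva⟩
      · exact ⟨v, Sym2.mem_mk_right _ _, by simp⟩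
      · exact ⟨v, Sym2.mem_mk_left _ _, by simp⟩
      · exact ⟨x, Sym2.mem_mk_left _ _, dist_le_two_of_adj hvx⟩

/-- The cycle `a c ⋯ y x z ⋯ a` is rerouted as `a v x c ⋯ y z ⋯ a`. -/
lemma hasLocalExtension_bridge {t : G.Walk c y} {r : G.Walk z a} (hac : G.Adj a c)
    (hyx : G.Adj y x) (hxz : G.Adj x z)
    (hD : (cons hac (t.append (cons hyx (cons hxz r)))).IsCycle)
    (hv : v ∉ (cons hac (t.append (cons hyx (cons hxz r)))).support)
    (hva : G.Adj v a) (hvx : G.Adj v x) (hxc : G.Adj x c) (hyz : G.Adj y z) :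
    G.HasLocalExtension v (cons hac (t.append (cons hyx (cons hxz r)))) := by
  have hnodup := hD.support_nodup
  simp only [support_cons, List.tail_cons, support_append, List.nodup_middle, List.nodup_cons,
    List.mem_append, not_or] at hnodup
  simp only [support_cons, support_append, List.tail_cons, List.mem_cons, List.mem_append,
    not_or] at hv
  refine ⟨a, cons hva.symm (cons hvx (cons hxc (t.append (cons hyz r)))), v, ?_,
    ⟨a, by simp, .inr hva.symm⟩, ?_, ?_, ?_⟩
  · refine isCycle_of_nodup_support_tail ?_ (by simp)
    simp only [support_cons, List.tail_cons, support_append, List.nodup_cons, List.mem_cons,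
      List.mem_append, not_or]
    exact ⟨⟨hvx.ne, hv.2.1, hv.2.2.2⟩, hnodup⟩
  · intro w hw
    simp only [Set.mem_union, Set.mem_singleton_iff, Set.mem_ofPred_eq,
      support_cons, mem_support_append_iff, List.mem_cons] at hw ⊢
    tauto
  · intro w hw
    simp only [Set.mem_union, Set.mem_insert_iff, Set.mem_singleton_iff, Set.mem_ofPred_eq,
      support_cons, mem_support_append_iff, List.mem_cons] at hw ⊢
    tauto
  · refine forall_mem_symmDiff_of_subset_union
      (F := {s(a, c), s(y, x), s(x, z), s(a, v), s(v, x), s(x, c), s(y, z)}) ?_ ?_ ?_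
    · intro e he
      simp only [Set.mem_union, Set.mem_insert_iff, Set.mem_singleton_iff, Set.mem_ofPred_eq,
        edges_cons, edges_append, List.mem_append, List.mem_cons] at he ⊢
      tauto
    · intro e he
      simp only [Set.mem_union, Set.mem_insert_iff, Set.mem_singleton_iff, Set.mem_ofPred_eq,
        edges_cons, edges_append, List.mem_append, List.mem_cons] at he ⊢
      tauto
    · rintro e (rfl | rfl | rfl | rfl | rfl | rfl | rfl)
      · exact ⟨a, Sym2.mem_mk_left _ _, dist_le_two_of_adj hva⟩
      · exact ⟨x, Sym2.mem_mk_right _ _, dist_le_two_of_adj hvx⟩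
      · exact ⟨x, Sym2.mem_mk_left _ _, dist_le_two_of_adj hvx⟩
      · exact ⟨v, Sym2.mem_mk_right _ _, by simp⟩
      · exact ⟨v, Sym2.mem_mk_left _ _, by simp⟩
      · exact ⟨x, Sym2.mem_mk_left _ _, dist_le_two_of_adj hvx⟩
      · exact ⟨y, Sym2.mem_mk_left _ _, dist_le_two_of_adj_of_adj hvx hyx.symm⟩

lemma hasLocalExtension_of_adj_snd {D : G.Walk a a} (hD : D.IsCycle) (hv : v ∉ D.support)
    (hva : G.Adj v a) (hvc : G.Adj v D.snd) : G.HasLocalExtension v D := by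
  obtain ⟨c, hac, q, rfl⟩ := not_nil_iff.1 hD.not_nil
  rw [snd_cons] at hvc
  exact hasLocalExtension_insert (t := nil) hac hD hv hva.symm hvc

lemma hasLocalExtension_of_adj_of_adj_snd (hclaw : HFree claw G) {D : G.Walk a a}
    (hD : D.IsCycle) (hv : v ∉ D.support) (hva : G.Adj v a) (hvx : G.Adj v x)
    (hxc : G.Adj x D.snd) (hxa : x ≠ a) (hxc' : x ≠ D.snd) : G.HasLocalExtension v D := by
  classical
  obtain ⟨c, hac, q, rfl⟩ := not_nil_iff.1 hD.not_nil
  rw [snd_cons] at hxc hxc'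
  by_cases hxq : x ∉ q.support
  · exact hasLocalExtension_detour hac hD hv (by simp [hxa, hxq]) hva hvx hxc
  rw [not_not] at hxq
  obtain ⟨z, hxz, r, hr⟩ := exists_eq_cons_of_ne hxa (q.dropUntil x hxq)
  obtain ⟨y', hcy', s, hs⟩ := exists_eq_cons_of_ne hxc'.symm (q.takeUntil x hxq)
  obtain ⟨y, t, hyx, hst⟩ := exists_cons_eq_concat hcy' s
  obtain rfl : q = (t.concat hyx).append (cons hxz r) := by rw [← hst, ← hs, ← hr, take_spec]
  by_cases hvz : G.Adj v z
  · rw [← cons_append] at hD hv ⊢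
    exact hasLocalExtension_insert hxz hD hv hvx.symm hvz
  rw [concat_append] at hD hv ⊢
  by_cases hvy : G.Adj v y
  · rw [← cons_append] at hD hv ⊢
    exact hasLocalExtension_insert hyx hD hv hvy.symm hvx
  have hyz : y ≠ z := by
    rintro rfl
    have hnodup := hD.support_nodup
    rw [support_cons, List.tail_cons, support_append] at hnodup
    exact List.disjoint_of_nodup_append hnodup t.end_mem_support (by simp)
  have hvy' : v ≠ y := by rintro rfl; simp at hv
  have hvz' : v ≠ z := by rintro rfl; simp at hv
  exact hasLocalExtension_bridge hac hyx hxz hD hv hva hvx hxc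
    (adj_of_clawFree hclaw hvx.symm hyx.symm hxz hvy' hvz' hyz hvy hvz)

end SimpleGraph

theorem stmt_6_general {V : Type} (G : SimpleGraph V) (hclaw : HFree claw G)
    (hpaw : PawCondition G) {a : V} (C : G.Walk a a) (hC : C.IsCycle)
    (v : V) (hv : v ∉ C.support) (hvN : ∃ u ∈ C.support, G.Adj u v) :
    ∃ (b : V) (C' : G.Walk b b) (w : V), C'.IsCycle ∧
      (∃ u ∈ C.support, u = w ∨ G.Adj u w) ∧
      {x | x ∈ C.support} ∪ {v} ⊆ {x | x ∈ C'.support} ∧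
      {x | x ∈ C'.support} ⊆ {x | x ∈ C.support} ∪ {v, w} ∧
      ∀ e ∈ symmDiff {e | e ∈ C.edges} {e | e ∈ C'.edges},
        ∃ x ∈ e, G.dist v x ≤ 2 := by
  classical
  obtain ⟨u, hu, huv⟩ := hvN
  refine HasLocalExtension.of_rotate hu ?_
  set D := C.rotate u hu
  have hD : D.IsCycle := hC.rotate hu
  have hvD : v ∉ D.support := by simpa [D] using hv
  have hvD' : v ∉ D.reverse.support := by simpa using hvD
  have hvc_ne : v ≠ D.snd := fun h => hvD (h ▸ D.getVert_mem_support 1)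
  have hvd_ne : v ≠ D.penultimate := fun h => hvD (h ▸ D.getVert_mem_support _)
  have hac : G.Adj u D.snd := Walk.adj_snd hD.not_nil
  have had : G.Adj u D.penultimate := (Walk.adj_penultimate hD.not_nil).symm
  by_cases hvc : G.Adj v D.snd
  · exact hasLocalExtension_of_adj_snd hD hvD huv.symm hvc
  by_cases hvd : G.Adj v D.penultimate
  · exact (hasLocalExtension_of_adj_snd hD.reverse hvD' huv.symm
      (by rwa [Walk.snd_reverse])).of_reverse
  have hcd : G.Adj D.snd D.penultimate :=
    adj_of_clawFree hclaw huv hac had hvc_ne hvd_ne hD.snd_ne_penultimate hvc hvd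
  obtain ⟨x, hx, hxv, hxcd⟩ := hpaw v u D.snd D.penultimate huv.symm hac had hcd hvc hvd
    hvc_ne hvd_ne
  simp only [Set.mem_insert_iff, Set.mem_singleton_iff, not_or] at hx
  rcases hxcd with hxc | hxd
  · exact hasLocalExtension_of_adj_of_adj_snd hclaw hD hvD huv.symm hxv.symm hxc hx.2.1 hx.2.2.1
  · exact (hasLocalExtension_of_adj_of_adj_snd hclaw hD.reverse hvD' huv.symm hxv.symm
      (by rwa [Walk.snd_reverse]) hx.2.1 (by rw [Walk.snd_reverse]; exact hx.2.2.2)).of_reverse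

/-- cycle extension lemma. Any cycle `C` can be extended through a
neighbouring vertex `v` by at most one further vertex `w ∈ N(C)`, altering only edges
with an endvertex at distance at most `2` from `v`. -/
theorem stmt_6 {V : Type} (G : SimpleGraph V) (h2 : TwoConnected G)
    (hlf : ∀ v : V, (G.neighborSet v).Finite) (hclaw : HFree claw G)
    (hpaw : PawCondition G) {a : V} (C : G.Walk a a) (hC : C.IsCycle)
    (v : V) (hv : v ∉ C.support) (hvN : ∃ u ∈ C.support, G.Adj u v) :
    ∃ (b : V) (C' : G.Walk b b) (w : V), C'.IsCycle ∧
      (∃ u ∈ C.support, u = w ∨ G.Adj u w) ∧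
      {x | x ∈ C.support} ∪ {v} ⊆ {x | x ∈ C'.support} ∧
      {x | x ∈ C'.support} ⊆ {x | x ∈ C.support} ∪ {v, w} ∧
      ∀ e ∈ symmDiff {e | e ∈ C.edges} {e | e ∈ C'.edges},
        ∃ x ∈ e, G.dist v x ≤ 2 :=
  stmt_6_general G hclaw hpaw C hC v hv hvN
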